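/- arXiv:1601.00962 — 4 statements merged into one kernel-verified Lean document; each statement's English description precedes it below -/
import Mathlib

section
/- Let ρ be a two-qubit state with correlation matrix T, and let λ1 ≥ λ2 be the two largest eigenvalues of the real symmetric matrix T * Tᵀ. Then 2·√(λ1+λ2) is the greatest element of the set of analog CHSH values of ρ taken over all unit vectors a1, a2 and all linearly independent unit vectors b1, b2 (with their dual basis b1', b2'): every such analog CHSH value is at most 2·√(λ1+λ2), and the value 2·√(λ1+λ2) is attained for some choice (indeed with b1, b2 orthonormal). -/
/-!
Write `A` for the linear map of `Tᵀ`, so that `E(a, b) = ⟪A a, b⟫`. The analog CHSH value is then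
`‖P (A (a₁ + a₂))‖ + ‖P (A (a₁ - a₂))‖`, where `P` is the orthogonal projection onto
`span {b₁, b₂}` written in the dual basis. Dropping `P`, and using that `a₁ + a₂ ⟂ a₁ - a₂` with
`‖a₁ + a₂‖² + ‖a₁ - a₂‖² = 4`, Cauchy–Schwarz and Ky Fan's inequality
`‖A x‖² + ‖A y‖² ≤ σ₀² + σ₁²` for orthonormal `x, y` bound it by `2 √(σ₀² + σ₁²)`, where
`σ₀ ≥ σ₁` are the top singular values of `A`, i.e. `σ₀² = λ₁` and `σ₁² = λ₂`. Equality holds for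
`a₁,₂ = p u ± q v`, where `u, v` are the top two right singular vectors, `b₁, b₂` the matching left
ones, and `(p, q)` is the unit vector along `(σ₀, σ₁)`.
-/

open Matrix Polynomial
open scoped Kronecker Matrix ComplexOrder

noncomputable section

/-- Pauli matrix σ1. -/
def σ₁ : Matrix (Fin 2) (Fin 2) ℂ := !![0, 1; 1, 0]
/-- Pauli matrix σ2. -/
def σ₂ : Matrix (Fin 2) (Fin 2) ℂ := !![0, -Complex.I; Complex.I, 0]
/-- Pauli matrix σ3. -/
def σ₃ : Matrix (Fin 2) (Fin 2) ℂ := !![1, 0; 0, -1]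

/-- The three Pauli matrices. -/
def pauli : Fin 3 → Matrix (Fin 2) (Fin 2) ℂ := ![σ₁, σ₂, σ₃]

/-- `v·σ` for a real 3-vector `v`. -/
def pauliVec (v : EuclideanSpace ℝ (Fin 3)) : Matrix (Fin 2) (Fin 2) ℂ :=
  (v 0 : ℂ) • σ₁ + (v 1 : ℂ) • σ₂ + (v 2 : ℂ) • σ₃

/-- Full correlation `E = Re tr(ρ ((a·σ) ⊗ₖ (b·σ)))`. -/
def corrE (ρ : Matrix (Fin 2 × Fin 2) (Fin 2 × Fin 2) ℂ)
    (a b : EuclideanSpace ℝ (Fin 3)) : ℝ :=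
  ((ρ * (pauliVec a ⊗ₖ pauliVec b)).trace).re

/-- Correlation matrix `T i j = Re tr(ρ (σᵢ ⊗ₖ σⱼ))` of a two-qubit state. -/
def corrMatrix (ρ : Matrix (Fin 2 × Fin 2) (Fin 2 × Fin 2) ℂ) : Matrix (Fin 3) (Fin 3) ℝ :=
  fun i j => ((ρ * (pauli i ⊗ₖ pauli j)).trace).re

/-- The CHSH value `E(1,1) + E(2,1) + E(1,2) − E(2,2)` of `ρ` at `(a1,a2,b1,b2)`. -/
def CHSHval (ρ : Matrix (Fin 2 × Fin 2) (Fin 2 × Fin 2) ℂ)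
    (a1 a2 b1 b2 : EuclideanSpace ℝ (Fin 3)) : ℝ :=
  corrE ρ a1 b1 + corrE ρ a2 b1 + corrE ρ a1 b2 - corrE ρ a2 b2

/-- The real inner product on `EuclideanSpace ℝ (Fin 3)`. -/
def rip (x y : EuclideanSpace ℝ (Fin 3)) : ℝ := inner ℝ x y

/-- Action of a real 3×3 matrix on a Euclidean 3-vector. -/
def matVec (T : Matrix (Fin 3) (Fin 3) ℝ) (v : EuclideanSpace ℝ (Fin 3)) :
    EuclideanSpace ℝ (Fin 3) :=
  (EuclideanSpace.equiv (Fin 3) ℝ).symm (T.mulVec (EuclideanSpace.equiv (Fin 3) ℝ v))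

/-- `b1', b2'` is the dual basis of the pair `b1, b2` inside `span{b1, b2}`:
`⟪b'_m, b_n⟫ = δ_{mn}`. -/
def IsDualPair (b1 b2 b1' b2' : EuclideanSpace ℝ (Fin 3)) : Prop :=
  b1' ∈ Submodule.span ℝ ({b1, b2} : Set (EuclideanSpace ℝ (Fin 3))) ∧
  b2' ∈ Submodule.span ℝ ({b1, b2} : Set (EuclideanSpace ℝ (Fin 3))) ∧
  rip b1' b1 = 1 ∧ rip b1' b2 = 0 ∧ rip b2' b1 = 0 ∧ rip b2' b2 = 1

/-- The analog CHSH value of `ρ` at `(a1,a2,b1,b2)`, with `b1', b2'` the dual basis of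
`b1, b2`. -/
def ACHSHval (ρ : Matrix (Fin 2 × Fin 2) (Fin 2 × Fin 2) ℂ)
    (a1 a2 b1 b2 b1' b2' : EuclideanSpace ℝ (Fin 3)) : ℝ :=
  ‖(corrE ρ a1 b1 + corrE ρ a2 b1) • b1' + (corrE ρ a1 b2 + corrE ρ a2 b2) • b2'‖ +
  ‖(corrE ρ a1 b1 - corrE ρ a2 b1) • b1' + (corrE ρ a1 b2 - corrE ρ a2 b2) • b2'‖

/-- A family `P a m` (outcome `a`, setting `m`) of 2×2 matrices admits a finite
local-hidden-state model. -/
def HasLHSModel (P : Fin 2 → Fin 2 → Matrix (Fin 2) (Fin 2) ℂ) : Prop :=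
  ∃ (N : ℕ) (τ : Fin N → Matrix (Fin 2) (Fin 2) ℂ) (q : Fin 2 → Fin 2 → Fin N → ℝ),
    (∀ lam, (τ lam).PosSemidef) ∧
    (∀ a m lam, 0 ≤ q a m lam ∧ q a m lam ≤ 1) ∧
    (∀ m lam, q 0 m lam + q 1 m lam = 1) ∧
    (∀ a m, P a m = ∑ lam, q a m lam • τ lam)

/-- Full correlations `E m n` admit a finite LHV-LHS model with respect to Bob's
measurement vectors `b 0, b 1`. -/
def HasLHVLHSModel (E : Fin 2 → Fin 2 → ℝ) (b : Fin 2 → EuclideanSpace ℝ (Fin 3)) : Prop :=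
  ∃ (N : ℕ) (p : Fin N → ℝ) (e : Fin 2 → Fin N → ℝ)
    (ρs : Fin N → Matrix (Fin 2) (Fin 2) ℂ),
    (∀ lam, 0 ≤ p lam) ∧ (∑ lam, p lam = 1) ∧
    (∀ m lam, e m lam ∈ Set.Icc (-1 : ℝ) 1) ∧
    (∀ lam, (ρs lam).PosSemidef ∧ (ρs lam).trace = 1) ∧
    (∀ m n, E m n = ∑ lam, p lam * e m lam * ((ρs lam * pauliVec (b n)).trace).re)

/-- Full correlations `E m n` admit a finite LHV model. -/
def HasLHVModel (E : Fin 2 → Fin 2 → ℝ) : Prop :=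
  ∃ (N : ℕ) (p : Fin N → ℝ) (e f : Fin 2 → Fin N → ℝ),
    (∀ lam, 0 ≤ p lam) ∧ (∑ lam, p lam = 1) ∧
    (∀ m lam, e m lam ∈ Set.Icc (-1 : ℝ) 1) ∧
    (∀ n lam, f n lam ∈ Set.Icc (-1 : ℝ) 1) ∧
    (∀ m n, E m n = ∑ lam, p lam * e m lam * f n lam)

/-- The effect `(1/2)(I + (−1)^i v·σ)` of the projective measurement along `v`. -/
def effect (v : EuclideanSpace ℝ (Fin 3)) (i : Fin 2) : Matrix (Fin 2) (Fin 2) ℂ :=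
  (1/2 : ℝ) • ((1 : Matrix (Fin 2) (Fin 2) ℂ) + ((-1 : ℝ) ^ (i : ℕ)) • pauliVec v)

open scoped RealInnerProductSpace
open Module

theorem sum_mul_le_add_of_antitone {n : ℕ} {μ : ℕ → ℝ} {c : Fin n → ℝ} (hμ : Antitone μ)
    (hμ1 : 0 ≤ μ 1) (hc0 : ∀ i, 0 ≤ c i) (hc1 : ∀ i, c i ≤ 1) (hc : ∑ i, c i ≤ 2) :
    ∑ i : Fin n, μ i * c i ≤ μ 0 + μ 1 := by
  have hμ01 : μ 1 ≤ μ 0 := hμ zero_le_one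
  have hexcess : ∑ i : Fin n, (μ i - μ 1) * c i ≤ μ 0 - μ 1 := by
    cases n with
    | zero => simpa using hμ01
    | succ k =>
      rw [Fin.sum_univ_succ]
      have hrest : ∑ j : Fin k, (μ j.succ - μ 1) * c j.succ ≤ 0 :=
        Finset.sum_nonpos fun j _ => mul_nonpos_of_nonpos_of_nonneg
          (sub_nonpos.2 (hμ (by simp [Fin.val_succ]))) (hc0 _)
      have hfirst : (μ (0 : Fin (k + 1)) - μ 1) * c 0 ≤ μ 0 - μ 1 :=
        mul_le_of_le_one_right (sub_nonneg.2 hμ01) (hc1 0)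
      simpa using add_le_add hfirst hrest
  calc ∑ i : Fin n, μ i * c i = ∑ i : Fin n, (μ i - μ 1) * c i + μ 1 * ∑ i, c i := by
        simp only [sub_mul, Finset.sum_sub_distrib, Finset.mul_sum]; ring
    _ ≤ (μ 0 - μ 1) + μ 1 * 2 := add_le_add hexcess (mul_le_mul_of_nonneg_left hc hμ1)
    _ = μ 0 + μ 1 := by ring

section InnerProductSpace

variable {E F : Type*} [NormedAddCommGroup E] [InnerProductSpace ℝ E]
  [NormedAddCommGroup F] [InnerProductSpace ℝ F]

theorem inner_sq_add_inner_sq_le_norm_sq {x y : E} (hx : ‖x‖ ≤ 1) (hy : ‖y‖ ≤ 1)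
    (hxy : ⟪x, y⟫ = 0) (e : E) : ⟪e, x⟫ ^ 2 + ⟪e, y⟫ ^ 2 ≤ ‖e‖ ^ 2 := by
  have h := real_inner_self_nonneg (x := e - ⟪e, x⟫ • x - ⟪e, y⟫ • y)
  have hyx : ⟪y, x⟫ = 0 := by rw [real_inner_comm, hxy]
  simp only [inner_sub_left, inner_sub_right, real_inner_smul_left, real_inner_smul_right,
    real_inner_self_eq_norm_sq, hxy, hyx, real_inner_comm e x, real_inner_comm e y,
    norm_smul, mul_pow, Real.norm_eq_abs, sq_abs] at h
  have hx2 : ‖x‖ ^ 2 ≤ 1 := pow_le_one₀ (norm_nonneg x) hx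
  have hy2 : ‖y‖ ^ 2 ≤ 1 := pow_le_one₀ (norm_nonneg y) hy
  nlinarith [mul_nonneg (sq_nonneg ⟪e, x⟫) (sub_nonneg.2 hx2),
    mul_nonneg (sq_nonneg ⟪e, y⟫) (sub_nonneg.2 hy2)]

theorem mul_add_mul_le_sqrt_mul_sqrt (p q r s : ℝ) :
    p * q + r * s ≤ √(p ^ 2 + r ^ 2) * √(q ^ 2 + s ^ 2) := by
  rw [← Real.sqrt_mul (by positivity)]
  exact (le_abs_self _).trans (Real.abs_le_sqrt (by nlinarith [sq_nonneg (p * s - r * q)]))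

theorem exists_mul_add_mul_eq_sqrt {s t : ℝ} (hs : 0 ≤ s) (ht : 0 ≤ t) :
    ∃ p q : ℝ, 0 ≤ p ∧ 0 ≤ q ∧ p ^ 2 + q ^ 2 = 1 ∧ p * s + q * t = √(s ^ 2 + t ^ 2) := by
  rcases eq_or_lt_of_le (by positivity : 0 ≤ s ^ 2 + t ^ 2) with h0 | hpos
  · refine ⟨1, 0, zero_le_one, le_rfl, by norm_num, ?_⟩
    rw [← h0, Real.sqrt_zero]
    nlinarith
  · set r := √(s ^ 2 + t ^ 2)
    have hr : 0 < r := Real.sqrt_pos.2 hpos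
    have hr2 : r ^ 2 = s ^ 2 + t ^ 2 := Real.sq_sqrt hpos.le
    refine ⟨s / r, t / r, by positivity, by positivity, ?_, ?_⟩ <;> field_simp <;> linarith

theorem exists_norm_eq_one_inner_eq_zero_eq_norm_smul [FiniteDimensional ℝ F]
    (hF : 2 ≤ finrank ℝ F) {w z : F} (h : ⟪w, z⟫ = 0) :
    ∃ b : F, ‖b‖ = 1 ∧ ⟪b, z⟫ = 0 ∧ w = ‖w‖ • b := by
  rcases eq_or_ne w 0 with rfl | hw
  · obtain ⟨b, hb, hb0⟩ := Submodule.exists_mem_ne_zero_of_ne_bot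
      (LinearMap.ker_ne_bot_of_finrank_lt (f := innerₛₗ ℝ z) (by rw [finrank_self]; omega))
    refine ⟨‖b‖⁻¹ • b, norm_smul_inv_norm hb0, ?_, by simp⟩
    rw [real_inner_smul_left, real_inner_comm, show ⟪z, b⟫ = 0 from hb, mul_zero]
  · refine ⟨‖w‖⁻¹ • w, norm_smul_inv_norm hw, ?_, ?_⟩
    · rw [real_inner_smul_left, h, mul_zero]
    · rw [smul_inv_smul₀ (norm_ne_zero_iff.2 hw)]

theorem orthonormal_pair_iff {u v : E} :
    Orthonormal ℝ ![u, v] ↔ ‖u‖ = 1 ∧ ⟪u, v⟫ = 0 ∧ ‖v‖ = 1 := by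
  simp [orthonormal_vecCons_iff]

theorem Orthonormal.norm_smul_add_smul_sq {u v : E} (h : Orthonormal ℝ ![u, v]) (p q : ℝ) :
    ‖p • u + q • v‖ ^ 2 = p ^ 2 + q ^ 2 := by
  obtain ⟨hu, huv, hv⟩ := orthonormal_pair_iff.1 h
  rw [norm_add_sq_real, norm_smul, norm_smul, real_inner_smul_left, real_inner_smul_right, huv,
    hu, hv]
  simp

namespace LinearMap

variable [FiniteDimensional ℝ E] [FiniteDimensional ℝ F] (A : E →ₗ[ℝ] F)

theorem inner_apply_eigenvectorBasis_apply (i : Fin (finrank ℝ E)) (x : E) :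
    ⟪A (A.isSymmetric_adjoint_comp_self.eigenvectorBasis rfl i), A x⟫ =
      A.singularValues i ^ 2 * ⟪A.isSymmetric_adjoint_comp_self.eigenvectorBasis rfl i, x⟫ := by
  rw [← adjoint_inner_left, ← comp_apply, A.isSymmetric_adjoint_comp_self.apply_eigenvectorBasis,
    A.sq_singularValues_fin rfl, real_inner_smul_left]
  rfl

theorem norm_apply_sq_eq_sum (x : E) :
    ‖A x‖ ^ 2 = ∑ i : Fin (finrank ℝ E), A.singularValues i ^ 2 *
      ⟪A.isSymmetric_adjoint_comp_self.eigenvectorBasis rfl i, x⟫ ^ 2 := by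
  rw [← real_inner_self_eq_norm_sq, ← adjoint_inner_right,
    ← (A.isSymmetric_adjoint_comp_self.eigenvectorBasis rfl).sum_inner_mul_inner]
  refine Finset.sum_congr rfl fun i _ => ?_
  rw [adjoint_inner_right, inner_apply_eigenvectorBasis_apply, real_inner_comm]
  ring

theorem norm_apply_sq_add_norm_apply_sq_le {x y : E} (hx : ‖x‖ ≤ 1) (hy : ‖y‖ ≤ 1)
    (hxy : ⟪x, y⟫ = 0) :
    ‖A x‖ ^ 2 + ‖A y‖ ^ 2 ≤ A.singularValues 0 ^ 2 + A.singularValues 1 ^ 2 := by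
  set e := A.isSymmetric_adjoint_comp_self.eigenvectorBasis rfl
  have hμ : Antitone fun k => A.singularValues k ^ 2 := fun i j hij =>
    pow_le_pow_left₀ (A.singularValues_nonneg j) (A.singularValues_antitone hij) 2
  have hc : ∑ i, (⟪e i, x⟫ ^ 2 + ⟪e i, y⟫ ^ 2) ≤ 2 := by
    rw [Finset.sum_add_distrib, e.sum_sq_inner_right, e.sum_sq_inner_right]
    nlinarith [norm_nonneg x, norm_nonneg y]
  rw [A.norm_apply_sq_eq_sum x, A.norm_apply_sq_eq_sum y, ← Finset.sum_add_distrib]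
  simp_rw [← mul_add]
  refine sum_mul_le_add_of_antitone hμ (sq_nonneg _) (fun i => by positivity) (fun i => ?_) hc
  simpa [e.norm_eq_one] using inner_sq_add_inner_sq_le_norm_sq hx hy hxy (e i)

theorem norm_apply_add_norm_apply_le {c d : E} (hcd : ⟪c, d⟫ = 0) :
    ‖A c‖ + ‖A d‖ ≤
      √(‖c‖ ^ 2 + ‖d‖ ^ 2) * √(A.singularValues 0 ^ 2 + A.singularValues 1 ^ 2) := by
  -- normalizing `0` gives `0`, which the bound `‖x‖ ≤ 1` of the two-vector estimate tolerates
  have hnormalize : ∀ z : E, ‖‖z‖⁻¹ • z‖ ≤ 1 ∧ ‖A z‖ = ‖z‖ * ‖A (‖z‖⁻¹ • z)‖ := by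
    intro z
    rcases eq_or_ne z 0 with rfl | hz
    · simp
    · have hz' : ‖z‖ ≠ 0 := norm_ne_zero_iff.2 hz
      rw [map_smul, norm_smul, norm_smul, norm_inv, norm_norm, inv_mul_cancel₀ hz',
        mul_inv_cancel_left₀ hz']
      exact ⟨le_rfl, rfl⟩
  obtain ⟨hc1, hc⟩ := hnormalize c
  obtain ⟨hd1, hd⟩ := hnormalize d
  have horth : ⟪‖c‖⁻¹ • c, ‖d‖⁻¹ • d⟫ = 0 := by
    rw [real_inner_smul_left, real_inner_smul_right, hcd, mul_zero, mul_zero]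
  calc ‖A c‖ + ‖A d‖ = ‖c‖ * ‖A (‖c‖⁻¹ • c)‖ + ‖d‖ * ‖A (‖d‖⁻¹ • d)‖ := by rw [← hc, ← hd]
    _ ≤ √(‖c‖ ^ 2 + ‖d‖ ^ 2) * √(‖A (‖c‖⁻¹ • c)‖ ^ 2 + ‖A (‖d‖⁻¹ • d)‖ ^ 2) :=
        mul_add_mul_le_sqrt_mul_sqrt _ _ _ _
    _ ≤ √(‖c‖ ^ 2 + ‖d‖ ^ 2) * √(A.singularValues 0 ^ 2 + A.singularValues 1 ^ 2) :=
        mul_le_mul_of_nonneg_left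
          (Real.sqrt_le_sqrt (A.norm_apply_sq_add_norm_apply_sq_le hc1 hd1 horth)) (by positivity)

theorem norm_apply_add_add_norm_apply_sub_le {a₁ a₂ : E} (ha₁ : ‖a₁‖ = 1) (ha₂ : ‖a₂‖ = 1) :
    ‖A (a₁ + a₂)‖ + ‖A (a₁ - a₂)‖ ≤ 2 * √(A.singularValues 0 ^ 2 + A.singularValues 1 ^ 2) := by
  have horth : ⟪a₁ + a₂, a₁ - a₂⟫ = 0 :=
    (real_inner_add_sub_eq_zero_iff _ _).2 (ha₁.trans ha₂.symm)
  have hsq : ‖a₁ + a₂‖ ^ 2 + ‖a₁ - a₂‖ ^ 2 = 2 ^ 2 := by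
    rw [parallelogram_law_with_norm ℝ, ha₁, ha₂]; norm_num
  simpa [hsq] using A.norm_apply_add_norm_apply_le horth

theorem exists_orthonormal_apply_eq_smul (hE : 2 ≤ finrank ℝ E) (hF : 2 ≤ finrank ℝ F) :
    ∃ u v : E, ∃ b₁ b₂ : F, Orthonormal ℝ ![u, v] ∧ Orthonormal ℝ ![b₁, b₂] ∧
      A u = A.singularValues 0 • b₁ ∧ A v = A.singularValues 1 • b₂ := by
  set e := A.isSymmetric_adjoint_comp_self.eigenvectorBasis rfl
  have hnorm : ∀ i, ‖A (e i)‖ = A.singularValues i := by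
    intro i
    have h := A.inner_apply_eigenvectorBasis_apply i (e i)
    rw [real_inner_self_eq_norm_sq, real_inner_self_eq_norm_sq, e.norm_eq_one, one_pow,
      mul_one] at h
    exact (pow_left_inj₀ (norm_nonneg _) (A.singularValues_nonneg i) two_ne_zero).1 h
  set i₀ : Fin (finrank ℝ E) := ⟨0, by omega⟩
  set i₁ : Fin (finrank ℝ E) := ⟨1, by omega⟩
  have h01 : ⟪e i₀, e i₁⟫ = 0 := e.orthonormal.2 (by simp [i₀, i₁, Fin.ext_iff])
  obtain ⟨b₁, hb₁, hb₁₂, h₁⟩ := exists_norm_eq_one_inner_eq_zero_eq_norm_smul hF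
    (by rw [inner_apply_eigenvectorBasis_apply, h01, mul_zero] : ⟪A (e i₀), A (e i₁)⟫ = 0)
  obtain ⟨b₂, hb₂, hb₂₁, h₂⟩ := exists_norm_eq_one_inner_eq_zero_eq_norm_smul hF
    (by rwa [real_inner_comm] : ⟪A (e i₁), b₁⟫ = 0)
  refine ⟨e i₀, e i₁, b₁, b₂, ?_, ?_, ?_, ?_⟩
  · exact orthonormal_pair_iff.2 ⟨e.norm_eq_one _, h01, e.norm_eq_one _⟩
  · exact orthonormal_pair_iff.2 ⟨hb₁, by rwa [real_inner_comm], hb₂⟩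
  · rwa [hnorm] at h₁
  · rwa [hnorm] at h₂

theorem exists_apply_add_eq_smul_apply_sub_eq_smul (hE : 2 ≤ finrank ℝ E)
    (hF : 2 ≤ finrank ℝ F) :
    ∃ a₁ a₂ : E, ∃ b₁ b₂ : F, ∃ s t : ℝ, ‖a₁‖ = 1 ∧ ‖a₂‖ = 1 ∧ Orthonormal ℝ ![b₁, b₂] ∧
      0 ≤ s ∧ 0 ≤ t ∧ s + t = 2 * √(A.singularValues 0 ^ 2 + A.singularValues 1 ^ 2) ∧
      A (a₁ + a₂) = s • b₁ ∧ A (a₁ - a₂) = t • b₂ := by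
  obtain ⟨u, v, b₁, b₂, huv, hb, hu, hv⟩ := A.exists_orthonormal_apply_eq_smul hE hF
  obtain ⟨p, q, hp, hq, hpq, hsum⟩ :=
    exists_mul_add_mul_eq_sqrt (A.singularValues_nonneg 0) (A.singularValues_nonneg 1)
  have hσ₀ := A.singularValues_nonneg 0
  have hσ₁ := A.singularValues_nonneg 1
  refine ⟨p • u + q • v, p • u - q • v, b₁, b₂, 2 * p * A.singularValues 0,
    2 * q * A.singularValues 1, ?_, ?_, hb, by positivity, by positivity, by linarith, ?_, ?_⟩
  · rw [← pow_eq_one_iff_of_nonneg (norm_nonneg _) two_ne_zero, huv.norm_smul_add_smul_sq, hpq]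
  · rw [sub_eq_add_neg, ← neg_smul, ← pow_eq_one_iff_of_nonneg (norm_nonneg _) two_ne_zero,
      huv.norm_smul_add_smul_sq, neg_sq, hpq]
  · rw [show p • u + q • v + (p • u - q • v) = (2 * p) • u by module, map_smul, hu, smul_smul]
  · rw [show p • u + q • v - (p • u - q • v) = (2 * q) • v by module, map_smul, hv, smul_smul]

theorem IsSymmetric.eigenvalues_eq_of_charpoly_eq {S : E →ₗ[ℝ] E} (hS : S.IsSymmetric) {n : ℕ}
    (hn : finrank ℝ E = n) {l : Fin n → ℝ} (hl : Antitone l)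
    (h : S.charpoly = ∏ i, (X - C (l i))) : hS.eigenvalues hn = l := by
  apply List.ofFn_injective
  have hroots : (∏ i, (X - C (l i))).roots = Finset.univ.val.map l := by
    rw [← roots_multiset_prod_X_sub_C (Finset.univ.val.map l), Multiset.map_map]
    rfl
  rw [← hS.sort_roots_charpoly_eq_eigenvalues hn, h, hroots, Fin.univ_val_map]
  simp only [Multiset.map_coe, Multiset.coe_sort, RCLike.re_to_real, List.map_id_fun']
  apply List.mergeSort_of_pairwise
  simpa [← List.sortedGE_iff_pairwise] using fun i j hij => hl hij.le

end LinearMap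

end InnerProductSpace

theorem pauliVec_eq_sum (v : EuclideanSpace ℝ (Fin 3)) :
    pauliVec v = ∑ i, (v i : ℂ) • pauli i := by
  simp [pauliVec, pauli, Fin.sum_univ_three]

theorem pauliVec_kronecker_pauliVec (a b : EuclideanSpace ℝ (Fin 3)) :
    pauliVec a ⊗ₖ pauliVec b = ∑ i, ∑ j, ((a i * b j : ℝ) : ℂ) • (pauli i ⊗ₖ pauli j) := by
  ext p q
  simp only [pauliVec_eq_sum, kroneckerMap_apply, Matrix.sum_apply, Matrix.smul_apply,
    smul_eq_mul, Finset.sum_mul_sum, Complex.ofReal_mul]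
  exact Finset.sum_congr rfl fun i _ => Finset.sum_congr rfl fun j _ => by ring

theorem corrE_eq_inner (ρ : Matrix (Fin 2 × Fin 2) (Fin 2 × Fin 2) ℂ)
    (a b : EuclideanSpace ℝ (Fin 3)) :
    corrE ρ a b = ⟪toEuclideanLin (corrMatrix ρ)ᵀ a, b⟫ := by
  simp only [corrE, pauliVec_kronecker_pauliVec, Matrix.mul_sum, Matrix.mul_smul,
    Matrix.trace_sum, Matrix.trace_smul, Complex.re_sum, smul_eq_mul, Complex.re_ofReal_mul]
  simp only [PiLp.inner_apply, toLpLin_apply, mulVec, dotProduct, transpose_apply,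
    corrMatrix, RCLike.inner_apply, conj_trivial, Finset.mul_sum]
  rw [Finset.sum_comm]
  exact Finset.sum_congr rfl fun i _ => Finset.sum_congr rfl fun j _ => by ring

theorem ACHSHval_eq_inner (ρ : Matrix (Fin 2 × Fin 2) (Fin 2 × Fin 2) ℂ)
    (a₁ a₂ b₁ b₂ b₁' b₂' : EuclideanSpace ℝ (Fin 3)) :
    ACHSHval ρ a₁ a₂ b₁ b₂ b₁' b₂' =
      ‖⟪toEuclideanLin (corrMatrix ρ)ᵀ (a₁ + a₂), b₁⟫ • b₁' +
        ⟪toEuclideanLin (corrMatrix ρ)ᵀ (a₁ + a₂), b₂⟫ • b₂'‖ +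
      ‖⟪toEuclideanLin (corrMatrix ρ)ᵀ (a₁ - a₂), b₁⟫ • b₁' +
        ⟪toEuclideanLin (corrMatrix ρ)ᵀ (a₁ - a₂), b₂⟫ • b₂'‖ := by
  simp only [ACHSHval, corrE_eq_inner, map_add, map_sub, inner_add_left, inner_sub_left]

namespace IsDualPair

variable {b₁ b₂ b₁' b₂' : EuclideanSpace ℝ (Fin 3)}

/-- The map `w ↦ ⟪w, b₁⟫ b₁' + ⟪w, b₂⟫ b₂'` is the orthogonal projection onto `span {b₁, b₂}`. -/
theorem norm_inner_smul_add_inner_smul_le (h : IsDualPair b₁ b₂ b₁' b₂')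
    (w : EuclideanSpace ℝ (Fin 3)) :
    ‖⟪w, b₁⟫ • b₁' + ⟪w, b₂⟫ • b₂'‖ ≤ ‖w‖ := by
  obtain ⟨h₁, h₂, h₁₁, h₁₂, h₂₁, h₂₂⟩ := h
  obtain ⟨s, t, hP⟩ := Submodule.mem_span_pair.1
    (add_mem (Submodule.smul_mem _ ⟪w, b₁⟫ h₁) (Submodule.smul_mem _ ⟪w, b₂⟫ h₂))
  set P := ⟪w, b₁⟫ • b₁' + ⟪w, b₂⟫ • b₂'
  have hPb : ∀ z, ⟪z, P⟫ = s * ⟪z, b₁⟫ + t * ⟪z, b₂⟫ := fun z => by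
    rw [← hP, inner_add_right, real_inner_smul_right, real_inner_smul_right]
  have hPP : ‖P‖ ^ 2 = ⟪w, P⟫ := by
    rw [← real_inner_self_eq_norm_sq, hPb, hPb]
    simp only [rip] at h₁₁ h₁₂ h₂₁ h₂₂
    simp only [P, inner_add_left, real_inner_smul_left, h₁₁, h₁₂, h₂₁, h₂₂]
    ring
  nlinarith [real_inner_le_norm w P, norm_nonneg w, norm_nonneg P]

theorem of_orthonormal (h : Orthonormal ℝ ![b₁, b₂]) : IsDualPair b₁ b₂ b₁ b₂ := by
  obtain ⟨hb₁, hb₁₂, hb₂⟩ := orthonormal_pair_iff.1 h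
  refine ⟨Submodule.subset_span (by simp), Submodule.subset_span (by simp), ?_, hb₁₂, ?_, ?_⟩ <;>
    simp [rip, hb₁, hb₂, real_inner_comm, hb₁₂]

end IsDualPair

theorem sq_singularValues_toEuclideanLin_transpose {T : Matrix (Fin 3) (Fin 3) ℝ} {l₁ l₂ l₃ : ℝ}
    (h₁₂ : l₂ ≤ l₁) (h₂₃ : l₃ ≤ l₂)
    (hchar : (T * Tᵀ).charpoly = (X - C l₁) * (X - C l₂) * (X - C l₃)) :
    (toEuclideanLin Tᵀ).singularValues 0 ^ 2 = l₁ ∧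
      (toEuclideanLin Tᵀ).singularValues 1 ^ 2 = l₂ := by
  set A := toEuclideanLin Tᵀ
  have hn : finrank ℝ (EuclideanSpace ℝ (Fin 3)) = 3 := finrank_euclideanSpace_fin
  have hAA : A.adjoint ∘ₗ A = toEuclideanLin (T * Tᵀ) := by
    rw [← Matrix.toEuclideanLin_conjTranspose_eq_adjoint, conjTranspose_eq_transpose_of_trivial,
      transpose_transpose, toLpLin_mul_same]
  have hcharA : (A.adjoint ∘ₗ A).charpoly = ∏ i, (X - C (![l₁, l₂, l₃] i)) := by
    rw [hAA, Fin.prod_univ_three]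
    exact (Matrix.charpoly_toLin _ (EuclideanSpace.basisFun (Fin 3) ℝ).toBasis).trans hchar
  have heig := A.isSymmetric_adjoint_comp_self.eigenvalues_eq_of_charpoly_eq hn
    (by simp [antitone_vecCons, h₁₂, h₂₃]) hcharA
  exact ⟨by rw [A.sq_singularValues_of_lt hn (by norm_num), heig]; rfl,
    by rw [A.sq_singularValues_of_lt hn (by norm_num), heig]; rfl⟩

theorem achsh_isGreatest_general (ρ : Matrix (Fin 2 × Fin 2) (Fin 2 × Fin 2) ℂ)
    (l1 l2 l3 : ℝ) (h12 : l2 ≤ l1) (h23 : l3 ≤ l2)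
    (hchar : (corrMatrix ρ * (corrMatrix ρ)ᵀ).charpoly
      = (X - C l1) * (X - C l2) * (X - C l3)) :
    (∀ a1 a2 b1 b2 b1' b2' : EuclideanSpace ℝ (Fin 3),
      ‖a1‖ = 1 → ‖a2‖ = 1 → ‖b1‖ = 1 → ‖b2‖ = 1 →
      LinearIndependent ℝ ![b1, b2] → IsDualPair b1 b2 b1' b2' →
      ACHSHval ρ a1 a2 b1 b2 b1' b2' ≤ 2 * Real.sqrt (l1 + l2)) ∧
    (∃ a1 a2 b1 b2 b1' b2' : EuclideanSpace ℝ (Fin 3),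
      ‖a1‖ = 1 ∧ ‖a2‖ = 1 ∧ ‖b1‖ = 1 ∧ ‖b2‖ = 1 ∧
      LinearIndependent ℝ ![b1, b2] ∧ IsDualPair b1 b2 b1' b2' ∧
      rip b1 b2 = 0 ∧
      ACHSHval ρ a1 a2 b1 b2 b1' b2' = 2 * Real.sqrt (l1 + l2)) := by
  set A := toEuclideanLin (corrMatrix ρ)ᵀ
  obtain ⟨hσ₀, hσ₁⟩ := sq_singularValues_toEuclideanLin_transpose h12 h23 hchar
  rw [← hσ₀, ← hσ₁]
  refine ⟨fun a₁ a₂ b₁ b₂ b₁' b₂' ha₁ ha₂ _ _ _ hdual => ?_, ?_⟩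
  · rw [ACHSHval_eq_inner]
    exact (add_le_add (hdual.norm_inner_smul_add_inner_smul_le _)
      (hdual.norm_inner_smul_add_inner_smul_le _)).trans
        (A.norm_apply_add_add_norm_apply_sub_le ha₁ ha₂)
  · have h3 : 2 ≤ finrank ℝ (EuclideanSpace ℝ (Fin 3)) := by simp
    obtain ⟨a₁, a₂, b₁, b₂, s, t, ha₁, ha₂, hb, hs, ht, hst, h₁, h₂⟩ :=
      A.exists_apply_add_eq_smul_apply_sub_eq_smul h3 h3
    obtain ⟨hb₁, hb₁₂, hb₂⟩ := orthonormal_pair_iff.1 hb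
    refine ⟨a₁, a₂, b₁, b₂, b₁, b₂, ha₁, ha₂, hb₁, hb₂, hb.linearIndependent,
      IsDualPair.of_orthonormal hb, hb₁₂, ?_⟩
    rw [ACHSHval_eq_inner, h₁, h₂, ← hst]
    simp [real_inner_smul_left, real_inner_comm b₁ b₂, hb₁₂, hb₁, hb₂,
      norm_smul, abs_of_nonneg hs, abs_of_nonneg ht]

/-- `2√(λ1+λ2)` is the greatest analog CHSH value of a two-qubit state `ρ`
over all unit vectors `a1, a2` and linearly independent unit vectors `b1, b2` (with their
dual basis `b1', b2'`); moreover the maximum is attained with `b1, b2` orthonormal. -/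
theorem achsh_isGreatest (ρ : Matrix (Fin 2 × Fin 2) (Fin 2 × Fin 2) ℂ)
    (hρ : ρ.PosSemidef) (htr : ρ.trace = 1)
    (l1 l2 l3 : ℝ) (h12 : l2 ≤ l1) (h23 : l3 ≤ l2)
    (hchar : (corrMatrix ρ * (corrMatrix ρ)ᵀ).charpoly
      = (X - C l1) * (X - C l2) * (X - C l3)) :
    (∀ a1 a2 b1 b2 b1' b2' : EuclideanSpace ℝ (Fin 3),
      ‖a1‖ = 1 → ‖a2‖ = 1 → ‖b1‖ = 1 → ‖b2‖ = 1 →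
      LinearIndependent ℝ ![b1, b2] → IsDualPair b1 b2 b1' b2' →
      ACHSHval ρ a1 a2 b1 b2 b1' b2' ≤ 2 * Real.sqrt (l1 + l2)) ∧
    (∃ a1 a2 b1 b2 b1' b2' : EuclideanSpace ℝ (Fin 3),
      ‖a1‖ = 1 ∧ ‖a2‖ = 1 ∧ ‖b1‖ = 1 ∧ ‖b2‖ = 1 ∧
      LinearIndependent ℝ ![b1, b2] ∧ IsDualPair b1 b2 b1' b2' ∧
      rip b1 b2 = 0 ∧
      ACHSHval ρ a1 a2 b1 b2 b1' b2' = 2 * Real.sqrt (l1 + l2)) :=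
  achsh_isGreatest_general ρ l1 l2 l3 h12 h23 hchar
end
end

section
/- Let T be a real 3×3 matrix and let λ1 ≥ λ2 be the two largest eigenvalues of the real symmetric matrix T * Tᵀ. Then for all orthonormal pairs c1, c2 and b1, b2 in EuclideanSpace ℝ (Fin 3) (i.e., ‖c1‖ = ‖c2‖ = ‖b1‖ = ‖b2‖ = 1, ⟪c1,c2⟫ = 0, ⟪b1,b2⟫ = 0), one has ⟪c1, T b1⟫ + ⟪c2, T b2⟫ ≤ √λ1 + √λ2, the sum of the two largest singular values of T. -/
open Matrix Polynomial
open scoped Kronecker Matrix ComplexOrder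

noncomputable section

/-!
This is the case `k = 2` of Ky Fan's inequality `∑_{i<k} ⟪cᵢ, T bᵢ⟫ ≤ ∑_{i<k} σᵢ(T)`.
Put `gᵢⱼ = ⟪cᵢ, T bⱼ⟫`; for a real 2×2 matrix, `(g₁₁ + g₂₂)² ≤ ∑ gᵢⱼ² + 2 |det g|`.
Bessel's inequality for `c₁, c₂` bounds `∑ gᵢⱼ²` by `‖T b₁‖² + ‖T b₂‖²`, and the Binet–Cauchy
identity for cross products bounds `(det g)²` by the Gram determinant of `T b₁, T b₂`. Both bounds
are quadratic expressions in `TᵀT` evaluated at `b₁, b₂`. In an orthonormal eigenbasis of `TᵀT` the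
first is a combination of the eigenvalues with weights in `[0, 1]` summing to `2`, hence at most
`σ₁² + σ₂²`, and the second is a convex combination of the products of two distinct eigenvalues,
hence at most `σ₁² σ₂²`.
-/

open scoped InnerProductSpace
open Module

theorem sum_mul_le_add_of_antitone_s7 {m : ℕ} {μ w : Fin (m + 2) → ℝ} (hμ : Antitone μ)
    (hw₀ : ∀ i, 0 ≤ w i) (hw₁ : ∀ i, w i ≤ 1) (hw : ∑ i, w i = 2) :
    ∑ i, μ i * w i ≤ μ 0 + μ 1 := by
  have hterm : ∀ i, (μ i - μ 1) * w i ≤ if i = 0 then μ 0 - μ 1 else 0 := by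
    intro i
    split_ifs with hi
    · subst hi
      nlinarith [hμ (Fin.zero_le (1 : Fin (m + 2))), hw₁ 0]
    · have : μ i ≤ μ 1 := hμ (Fin.one_le_of_ne_zero hi)
      nlinarith [hw₀ i]
  calc ∑ i, μ i * w i = ∑ i, (μ i - μ 1) * w i + μ 1 * ∑ i, w i := by
        rw [Finset.mul_sum, ← Finset.sum_add_distrib]; congr 1; ext i; ring
    _ ≤ ∑ i : Fin (m + 2), (if i = 0 then μ 0 - μ 1 else 0) + μ 1 * 2 := by
        rw [hw]; gcongr with i; exact hterm i
    _ = μ 0 + μ 1 := by simp only [Finset.sum_ite_eq', Finset.mem_univ, ↓reduceIte]; ring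

theorem weighted_gram_le_of_antitone {μ a b : Fin 3 → ℝ} (hμ : Antitone μ) (hμ₂ : 0 ≤ μ 2)
    (ha : ∑ i, a i * a i = 1) (hb : ∑ i, b i * b i = 1) (hab : ∑ i, a i * b i = 0) :
    (∑ i, μ i * (a i * a i)) * (∑ i, μ i * (b i * b i)) - (∑ i, μ i * (a i * b i)) ^ 2
      ≤ μ 0 * μ 1 := by
  simp only [Fin.sum_univ_three] at *
  have h₀₁ : μ 1 ≤ μ 0 := hμ (by decide)
  have h₁₂ : μ 2 ≤ μ 1 := hμ (by decide)
  have hminors : (a 1 * b 2 - a 2 * b 1) ^ 2 + (a 0 * b 2 - a 2 * b 0) ^ 2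
      + (a 0 * b 1 - a 1 * b 0) ^ 2 = 1 := by
    linear_combination (b 0 * b 0 + b 1 * b 1 + b 2 * b 2) * ha + hb
      - (a 0 * b 0 + a 1 * b 1 + a 2 * b 2) * hab
  calc _ = μ 1 * μ 2 * (a 1 * b 2 - a 2 * b 1) ^ 2 + μ 0 * μ 2 * (a 0 * b 2 - a 2 * b 0) ^ 2
        + μ 0 * μ 1 * (a 0 * b 1 - a 1 * b 0) ^ 2 := by ring
    _ ≤ μ 0 * μ 1 * ((a 1 * b 2 - a 2 * b 1) ^ 2 + (a 0 * b 2 - a 2 * b 0) ^ 2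
        + (a 0 * b 1 - a 1 * b 0) ^ 2) := by
        have : μ 1 * μ 2 ≤ μ 0 * μ 1 := by nlinarith
        have : μ 0 * μ 2 ≤ μ 0 * μ 1 := by nlinarith
        nlinarith [sq_nonneg (a 1 * b 2 - a 2 * b 1), sq_nonneg (a 0 * b 2 - a 2 * b 0)]
    _ = μ 0 * μ 1 := by rw [hminors, mul_one]

theorem add_le_of_sum_sq_le_of_sq_det_le {a b c d p q : ℝ} (hp : 0 ≤ p) (hq : 0 ≤ q)
    (hF : a ^ 2 + b ^ 2 + c ^ 2 + d ^ 2 ≤ p ^ 2 + q ^ 2) (hdet : (a * d - b * c) ^ 2 ≤ (p * q) ^ 2) :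
    a + d ≤ p + q := by
  have hdet' := (abs_le_of_sq_le_sq' hdet (by positivity)).2
  refine (abs_le_of_sq_le_sq' ?_ (by positivity)).2
  nlinarith [sq_nonneg (b - c)]

theorem Orthonormal.inner_sq_add_inner_sq_le {E : Type*} [SeminormedAddCommGroup E]
    [InnerProductSpace ℝ E] {b₁ b₂ : E} (hb : Orthonormal ℝ ![b₁, b₂]) (u : E) :
    ⟪b₁, u⟫_ℝ ^ 2 + ⟪b₂, u⟫_ℝ ^ 2 ≤ ‖u‖ ^ 2 := by
  simpa [Fin.sum_univ_two] using hb.sum_inner_products_le u (s := Finset.univ)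

theorem EuclideanSpace.inner_cross_cross (a b c d : EuclideanSpace ℝ (Fin 3)) :
    ⟪WithLp.toLp 2 (a.ofLp ⨯₃ b.ofLp), WithLp.toLp 2 (c.ofLp ⨯₃ d.ofLp)⟫_ℝ
      = ⟪a, c⟫_ℝ * ⟪b, d⟫_ℝ - ⟪a, d⟫_ℝ * ⟪b, c⟫_ℝ := by
  simp only [EuclideanSpace.inner_eq_star_dotProduct, star_trivial, cross_dot_cross]
  simp only [dotProduct_comm]
  ring

theorem EuclideanSpace.sq_inner_mul_inner_sub_le {b₁ b₂ u₁ u₂ : EuclideanSpace ℝ (Fin 3)}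
    (hb : Orthonormal ℝ ![b₁, b₂]) :
    (⟪b₁, u₁⟫_ℝ * ⟪b₂, u₂⟫_ℝ - ⟪b₁, u₂⟫_ℝ * ⟪b₂, u₁⟫_ℝ) ^ 2
      ≤ ‖u₁‖ ^ 2 * ‖u₂‖ ^ 2 - ⟪u₁, u₂⟫_ℝ ^ 2 := by
  obtain ⟨hb₁, hb₁₂, hb₂⟩ : ‖b₁‖ = 1 ∧ ⟪b₁, b₂⟫_ℝ = 0 ∧ ‖b₂‖ = 1 := by
    simpa [orthonormal_vecCons_iff] using hb
  have h := real_inner_mul_inner_self_le (WithLp.toLp 2 (b₁.ofLp ⨯₃ b₂.ofLp))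
    (WithLp.toLp 2 (u₁.ofLp ⨯₃ u₂.ofLp))
  rw [inner_cross_cross, inner_cross_cross, inner_cross_cross] at h
  simp only [real_inner_self_eq_norm_sq, hb₁, hb₂, hb₁₂, real_inner_comm u₁ u₂, one_pow, mul_one,
    zero_mul, sub_zero, one_mul] at h
  simpa only [sq] using h

section Spectral

variable {E : Type*} [NormedAddCommGroup E] [InnerProductSpace ℝ E] [FiniteDimensional ℝ E]
  {S : E →ₗ[ℝ] E}

theorem LinearMap.IsSymmetric.eigenvalues_eq_of_charpoly_eq_s7 {n : ℕ} (hS : S.IsSymmetric)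
    (hn : finrank ℝ E = n) {l : Fin n → ℝ} (hl : Antitone l)
    (h : S.charpoly = ∏ i, (X - C (l i))) : hS.eigenvalues hn = l := by
  apply List.ofFn_injective
  rw [← hS.sort_roots_charpoly_eq_eigenvalues hn, h, roots_prod _ _ (by
      simp [Finset.prod_ne_zero_iff, X_sub_C_ne_zero])]
  simp only [roots_X_sub_C, Multiset.bind_singleton, Fin.univ_val_map, RCLike.re_to_real,
    Multiset.map_coe, List.map_ofFn, ge_iff_le, Multiset.coe_sort]
  apply List.mergeSort_of_pairwise
  simpa [List.pairwise_ofFn] using fun i j (hij : i < j) => hl hij.le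

theorem LinearMap.IsSymmetric.inner_apply_eq_sum_eigenvalues {n : ℕ} (hS : S.IsSymmetric)
    (hn : finrank ℝ E = n) (x y : E) :
    ⟪x, S y⟫_ℝ = ∑ i, hS.eigenvalues hn i *
      (⟪hS.eigenvectorBasis hn i, x⟫_ℝ * ⟪hS.eigenvectorBasis hn i, y⟫_ℝ) := by
  set e := hS.eigenvectorBasis hn
  rw [← e.sum_inner_mul_inner x (S y)]
  refine Finset.sum_congr rfl fun i _ => ?_
  rw [← hS (e i), hS.apply_eigenvectorBasis, real_inner_comm, real_inner_smul_left]
  simp only [RCLike.ofReal_real_eq_id, id_eq, e]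
  ring

theorem LinearMap.IsSymmetric.inner_add_inner_le {m : ℕ} (hS : S.IsSymmetric)
    (hn : finrank ℝ E = m + 2) {x y : E} (hxy : Orthonormal ℝ ![x, y]) :
    ⟪x, S x⟫_ℝ + ⟪y, S y⟫_ℝ ≤ hS.eigenvalues hn 0 + hS.eigenvalues hn 1 := by
  obtain ⟨hx, -, hy⟩ : ‖x‖ = 1 ∧ ⟪x, y⟫_ℝ = 0 ∧ ‖y‖ = 1 := by
    simpa [orthonormal_vecCons_iff] using hxy
  rw [hS.inner_apply_eq_sum_eigenvalues hn, hS.inner_apply_eq_sum_eigenvalues hn,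
    ← Finset.sum_add_distrib]
  simp_rw [← mul_add]
  apply sum_mul_le_add_of_antitone_s7 (hS.eigenvalues_antitone hn)
  · exact fun i => add_nonneg (mul_self_nonneg _) (mul_self_nonneg _)
  · intro i
    simpa [sq, real_inner_comm] using hxy.inner_sq_add_inner_sq_le (hS.eigenvectorBasis hn i)
  · simp only [← sq, Finset.sum_add_distrib, OrthonormalBasis.sum_sq_inner_right, hx, hy]
    norm_num

theorem LinearMap.IsSymmetric.inner_mul_inner_sub_sq_le (hS : S.IsSymmetric)
    (hn : finrank ℝ E = 3) (hμ₂ : 0 ≤ hS.eigenvalues hn 2) {x y : E}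
    (hxy : Orthonormal ℝ ![x, y]) :
    ⟪x, S x⟫_ℝ * ⟪y, S y⟫_ℝ - ⟪x, S y⟫_ℝ ^ 2 ≤ hS.eigenvalues hn 0 * hS.eigenvalues hn 1 := by
  obtain ⟨hx, hxy₀, hy⟩ : ‖x‖ = 1 ∧ ⟪x, y⟫_ℝ = 0 ∧ ‖y‖ = 1 := by
    simpa [orthonormal_vecCons_iff] using hxy
  have hcoord : ∀ z w : E,
      ∑ i, ⟪hS.eigenvectorBasis hn i, z⟫_ℝ * ⟪hS.eigenvectorBasis hn i, w⟫_ℝ = ⟪z, w⟫_ℝ :=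
    fun z w => by
      simp_rw [real_inner_comm z]
      exact (hS.eigenvectorBasis hn).sum_inner_mul_inner z w
  simp only [hS.inner_apply_eq_sum_eigenvalues hn]
  apply weighted_gram_le_of_antitone (hS.eigenvalues_antitone hn) hμ₂
  · rw [hcoord, real_inner_self_eq_norm_sq, hx, one_pow]
  · rw [hcoord, real_inner_self_eq_norm_sq, hy, one_pow]
  · rw [hcoord, hxy₀]

end Spectral

theorem LinearMap.inner_add_inner_le_singularValues {E : Type*} [NormedAddCommGroup E]
    [InnerProductSpace ℝ E] [FiniteDimensional ℝ E] (f : E →ₗ[ℝ] EuclideanSpace ℝ (Fin 3))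
    (hE : finrank ℝ E = 3) {b₁ b₂ : E} {c₁ c₂ : EuclideanSpace ℝ (Fin 3)}
    (hb : Orthonormal ℝ ![b₁, b₂]) (hc : Orthonormal ℝ ![c₁, c₂]) :
    ⟪c₁, f b₁⟫_ℝ + ⟪c₂, f b₂⟫_ℝ ≤ f.singularValues 0 + f.singularValues 1 := by
  have hP := f.isSymmetric_adjoint_comp_self
  have hσ : ∀ i : Fin 3, f.singularValues i ^ 2 = hP.eigenvalues hE i := f.sq_singularValues_fin hE
  have hgram : ∀ x y, ⟪f x, f y⟫_ℝ = ⟪x, (f.adjoint ∘ₗ f) y⟫_ℝ := fun x y =>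
    (f.adjoint_inner_right x (f y)).symm
  refine add_le_of_sum_sq_le_of_sq_det_le (b := ⟪c₁, f b₂⟫_ℝ) (c := ⟪c₂, f b₁⟫_ℝ)
    (f.singularValues_nonneg 0) (f.singularValues_nonneg 1) ?_ ?_
  · calc _ ≤ ‖f b₁‖ ^ 2 + ‖f b₂‖ ^ 2 := by
          linarith [hc.inner_sq_add_inner_sq_le (f b₁), hc.inner_sq_add_inner_sq_le (f b₂)]
      _ = ⟪b₁, (f.adjoint ∘ₗ f) b₁⟫_ℝ + ⟪b₂, (f.adjoint ∘ₗ f) b₂⟫_ℝ := by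
          rw [← real_inner_self_eq_norm_sq, ← real_inner_self_eq_norm_sq, hgram, hgram]
      _ ≤ hP.eigenvalues hE 0 + hP.eigenvalues hE 1 := hP.inner_add_inner_le hE hb
      _ = f.singularValues 0 ^ 2 + f.singularValues 1 ^ 2 := by rw [← hσ 0, ← hσ 1]; rfl
  · calc _ ≤ ‖f b₁‖ ^ 2 * ‖f b₂‖ ^ 2 - ⟪f b₁, f b₂⟫_ℝ ^ 2 :=
          EuclideanSpace.sq_inner_mul_inner_sub_le hc
      _ = ⟪b₁, (f.adjoint ∘ₗ f) b₁⟫_ℝ * ⟪b₂, (f.adjoint ∘ₗ f) b₂⟫_ℝ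
          - ⟪b₁, (f.adjoint ∘ₗ f) b₂⟫_ℝ ^ 2 := by
          rw [← real_inner_self_eq_norm_sq, ← real_inner_self_eq_norm_sq, hgram, hgram, hgram]
      _ ≤ hP.eigenvalues hE 0 * hP.eigenvalues hE 1 :=
          hP.inner_mul_inner_sub_sq_le hE (f.isPositive_adjoint_comp_self.nonneg_eigenvalues hE 2)
            hb
      _ = (f.singularValues 0 * f.singularValues 1) ^ 2 := by rw [mul_pow, ← hσ 0, ← hσ 1]; rfl

/-- for any real 3×3 matrix `T` and orthonormal pairs `c1, c2` and `b1, b2`,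
`⟪c1, T b1⟫ + ⟪c2, T b2⟫ ≤ √λ1 + √λ2`, the sum of the two largest singular values of `T`. -/
theorem singular_value_bound (T : Matrix (Fin 3) (Fin 3) ℝ)
    (l1 l2 l3 : ℝ) (h12 : l2 ≤ l1) (h23 : l3 ≤ l2)
    (hchar : (T * Tᵀ).charpoly = (X - C l1) * (X - C l2) * (X - C l3))
    (c1 c2 b1 b2 : EuclideanSpace ℝ (Fin 3))
    (hc1 : ‖c1‖ = 1) (hc2 : ‖c2‖ = 1) (hb1 : ‖b1‖ = 1) (hb2 : ‖b2‖ = 1)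
    (hc : rip c1 c2 = 0) (hb : rip b1 b2 = 0) :
    rip c1 (matVec T b1) + rip c2 (matVec T b2) ≤ Real.sqrt l1 + Real.sqrt l2 := by
  set f := T.toEuclideanLin
  have hn : finrank ℝ (EuclideanSpace ℝ (Fin 3)) = 3 := finrank_euclideanSpace_fin
  have hμ : f.isSymmetric_adjoint_comp_self.eigenvalues hn = ![l1, l2, l3] := by
    refine f.isSymmetric_adjoint_comp_self.eigenvalues_eq_of_charpoly_eq_s7 hn (by simp [h12, h23]) ?_
    rw [← toEuclideanLin_conjTranspose_eq_adjoint, conjTranspose_eq_transpose_of_trivial,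
      ← toLpLin_mul_same, toLpLin_eq_toLin, charpoly_toLin, charpoly_mul_comm, hchar,
      Fin.prod_univ_three]
    simp
  have hσ₀ : f.singularValues 0 = √l1 := by simpa [hμ] using f.singularValues_fin hn 0
  have hσ₁ : f.singularValues 1 = √l2 := by simpa [hμ] using f.singularValues_fin hn 1
  have hcc : Orthonormal ℝ ![c1, c2] := by simpa [orthonormal_vecCons_iff, hc1, hc2, rip] using hc
  have hbb : Orthonormal ℝ ![b1, b2] := by simpa [orthonormal_vecCons_iff, hb1, hb2, rip] using hb
  calc rip c1 (matVec T b1) + rip c2 (matVec T b2) = ⟪c1, f b1⟫_ℝ + ⟪c2, f b2⟫_ℝ := rfl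
    _ ≤ f.singularValues 0 + f.singularValues 1 := f.inner_add_inner_le_singularValues hn hbb hcc
    _ = √l1 + √l2 := by rw [hσ₀, hσ₁]

end
end

section
/- Let ν1, ν2 ∈ ℝ and β, γ1, γ2 ∈ EuclideanSpace ℝ (Fin 3), and for a ∈ {0,1} (a = 0 for outcome '+', a = 1 for outcome '−') and m ∈ {1,2} define the 2×2 complex matrix ρ(a,m) := (1/4)·((1 + (−1)^a·ν_m)·I + β·σ + (−1)^a·(γ_m·σ)). If each ρ(a,m) is positive semidefinite and the family (ρ(a,m)) admits a finite LHS model, then ‖γ1+γ2‖ + ‖γ1−γ2‖ ≤ 2. -/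
/-!
In a local-hidden-state model, `ρ(0,m) - ρ(1,m) = ∑_λ e_m(λ) σ(λ)` with `|e_m(λ)| ≤ 1` and
`ρ(0,m) + ρ(1,m) = ∑_λ σ(λ)`. The real-linear Bloch map `M ↦ (Re tr(M σₖ))ₖ` sends the first
identity to `γ_m = ∑_λ e_m(λ) b(λ)`, with `b(λ)` the Bloch vector of `σ(λ)`, and the trace
of the second gives `∑_λ tr σ(λ) = 1`. A positive semidefinite 2×2 matrix has Bloch vector of
norm at most its trace (this is `det ≥ 0`), so `‖γ₁ ± γ₂‖ ≤ ∑_λ |e₁(λ) ± e₂(λ)| tr σ(λ)`,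
and `|x + y| + |x - y| = 2 max (|x|, |y|) ≤ 2` finishes the proof.
-/

open Matrix Polynomial
open scoped Kronecker Matrix ComplexOrder

noncomputable section

theorem abs_add_add_abs_sub_le_two {x y : ℝ} (hx : |x| ≤ 1) (hy : |y| ≤ 1) :
    |x + y| + |x - y| ≤ 2 := by
  rw [abs_le] at hx hy
  rcases abs_cases (x + y) with ⟨h₁, -⟩ | ⟨h₁, -⟩ <;>
    rcases abs_cases (x - y) with ⟨h₂, -⟩ | ⟨h₂, -⟩ <;> linarith

theorem norm_sum_smul_add_add_norm_sum_smul_sub_le {ι E : Type*} [Fintype ι]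
    [SeminormedAddCommGroup E] [NormedSpace ℝ E] {v : ι → E} {t e₁ e₂ : ι → ℝ}
    (hv : ∀ i, ‖v i‖ ≤ t i) (he₁ : ∀ i, |e₁ i| ≤ 1) (he₂ : ∀ i, |e₂ i| ≤ 1) :
    ‖∑ i, e₁ i • v i + ∑ i, e₂ i • v i‖ + ‖∑ i, e₁ i • v i - ∑ i, e₂ i • v i‖ ≤
      2 * ∑ i, t i := by
  rw [← Finset.sum_add_distrib, ← Finset.sum_sub_distrib, Finset.mul_sum]
  refine (add_le_add (norm_sum_le _ _) (norm_sum_le _ _)).trans ?_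
  rw [← Finset.sum_add_distrib]
  refine Finset.sum_le_sum fun i _ => ?_
  rw [← add_smul, ← sub_smul, norm_smul, norm_smul, Real.norm_eq_abs, Real.norm_eq_abs,
    ← add_mul]
  exact mul_le_mul (abs_add_add_abs_sub_le_two (he₁ i) (he₂ i)) (hv i) (norm_nonneg _)
    zero_le_two

def reTrace : Matrix (Fin 2) (Fin 2) ℂ →ₗ[ℝ] ℝ where
  toFun M := M.trace.re
  map_add' M N := by simp
  map_smul' c M := by simp

def blochMap : Matrix (Fin 2) (Fin 2) ℂ →ₗ[ℝ] EuclideanSpace ℝ (Fin 3) where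
  toFun M := WithLp.toLp 2 fun k => (M * pauli k).trace.re
  map_add' M N := by ext k; simp [add_mul]
  map_smul' c M := by ext k; simp

theorem reTrace_one : reTrace 1 = 2 := by
  simp [reTrace]

theorem reTrace_pauliVec (v : EuclideanSpace ℝ (Fin 3)) : reTrace (pauliVec v) = 0 := by
  simp [reTrace, pauliVec, σ₁, σ₂, σ₃, trace_fin_two]

theorem blochMap_apply (M : Matrix (Fin 2) (Fin 2) ℂ) :
    blochMap M = !₂[(M 0 1 + M 1 0).re, (M 1 0 - M 0 1).im, (M 0 0 - M 1 1).re] := by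
  ext k; fin_cases k <;> simp [blochMap, pauli, σ₁, σ₂, σ₃, trace_fin_two, mul_apply] <;> ring

theorem blochMap_one : blochMap 1 = 0 := by
  ext k; fin_cases k <;> simp [blochMap_apply]

theorem blochMap_pauliVec (v : EuclideanSpace ℝ (Fin 3)) :
    blochMap (pauliVec v) = (2 : ℝ) • v := by
  ext k; fin_cases k <;> simp [blochMap_apply, pauliVec, σ₁, σ₂, σ₃] <;> ring

theorem norm_blochMap_le_reTrace {M : Matrix (Fin 2) (Fin 2) ℂ} (hM : M.PosSemidef) :
    ‖blochMap M‖ ≤ reTrace M := by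
  have h10 : M 1 0 = star (M 0 1) := (hM.isHermitian.apply 1 0).symm
  have h00 : (M 0 0).im = 0 := (Complex.nonneg_iff.mp (hM.diag_nonneg (i := 0))).2.symm
  have h11 : (M 1 1).im = 0 := (Complex.nonneg_iff.mp (hM.diag_nonneg (i := 1))).2.symm
  have htr : 0 ≤ reTrace M := (Complex.nonneg_iff.mp hM.trace_nonneg).1
  have hdet : (M 0 1).re ^ 2 + (M 0 1).im ^ 2 ≤ (M 0 0).re * (M 1 1).re := by
    have := (Complex.nonneg_iff.mp hM.det_nonneg).1
    simp only [det_fin_two, h10, RCLike.star_def, Complex.sub_re, Complex.mul_re, h00, h11,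
      mul_zero, sub_zero, Complex.conj_re, Complex.conj_im, mul_neg, sub_neg_eq_add,
      sub_nonneg] at this
    nlinarith
  have hnorm : ‖blochMap M‖ ^ 2 =
      (2 * (M 0 1).re) ^ 2 + (2 * (M 0 1).im) ^ 2 + ((M 0 0).re - (M 1 1).re) ^ 2 := by
    simp only [blochMap_apply, h10, RCLike.star_def, Complex.add_re, Complex.conj_re,
      Complex.sub_im, Complex.conj_im, Complex.sub_re, EuclideanSpace.real_norm_sq_eq,
      Fin.sum_univ_three, cons_val_zero, cons_val_one, cons_val]
    ring
  rw [← pow_le_pow_iff_left₀ (norm_nonneg _) htr two_ne_zero, hnorm]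
  simp only [reTrace, trace_fin_two, Complex.add_re, LinearMap.coe_mk, AddHom.coe_mk]
  nlinarith

theorem HasLHSModel.exists_sum_diff {P : Fin 2 → Fin 2 → Matrix (Fin 2) (Fin 2) ℂ}
    (h : HasLHSModel P) :
    ∃ (N : ℕ) (τ : Fin N → Matrix (Fin 2) (Fin 2) ℂ) (e : Fin 2 → Fin N → ℝ),
      (∀ lam, (τ lam).PosSemidef) ∧ (∀ m lam, |e m lam| ≤ 1) ∧
      (∀ m, P 0 m + P 1 m = ∑ lam, τ lam) ∧
      (∀ m, P 0 m - P 1 m = ∑ lam, e m lam • τ lam) := by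
  obtain ⟨N, τ, q, hτ, hq, hqsum, hP⟩ := h
  refine ⟨N, τ, fun m lam => q 0 m lam - q 1 m lam, hτ, fun m lam => ?_, fun m => ?_,
    fun m => ?_⟩
  · have := hq 0 m lam; have := hq 1 m lam
    rw [abs_le]; constructor <;> linarith
  · simp [hP, ← Finset.sum_add_distrib, ← add_smul, hqsum]
  · simp [hP, ← Finset.sum_sub_distrib, ← sub_smul]

theorem lhs_model_necessary_general (ν : Fin 2 → ℝ) (β : EuclideanSpace ℝ (Fin 3))
    (γ : Fin 2 → EuclideanSpace ℝ (Fin 3))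
    (P : Fin 2 → Fin 2 → Matrix (Fin 2) (Fin 2) ℂ)
    (hdef : ∀ a m, P a m = (1/4 : ℝ) •
      ((1 + (-1 : ℝ) ^ (a : ℕ) * ν m) • (1 : Matrix (Fin 2) (Fin 2) ℂ)
        + pauliVec β + ((-1 : ℝ) ^ (a : ℕ)) • pauliVec (γ m)))
    (hlhs : HasLHSModel P) :
    ‖γ 0 + γ 1‖ + ‖γ 0 - γ 1‖ ≤ 2 := by
  obtain ⟨N, τ, e, hτ, he, hsum, hdiff⟩ := hlhs.exists_sum_diff
  have hP₀ m : P 0 m = (1/4 : ℝ) • ((1 + ν m) • 1 + pauliVec β + pauliVec (γ m)) := by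
    simpa using hdef 0 m
  have hP₁ m : P 1 m = (1/4 : ℝ) • ((1 - ν m) • 1 + pauliVec β - pauliVec (γ m)) := by
    simpa [sub_eq_add_neg] using hdef 1 m
  have hγ m : γ m = ∑ lam, e m lam • blochMap (τ lam) :=
    calc γ m = blochMap (P 0 m - P 1 m) := by
          rw [hP₀, hP₁]
          simp only [map_sub, map_add, map_smul, blochMap_one, blochMap_pauliVec]
          module
      _ = ∑ lam, e m lam • blochMap (τ lam) := by simp [hdiff]
  have htr : ∑ lam, reTrace (τ lam) = 1 :=
    calc ∑ lam, reTrace (τ lam) = reTrace (P 0 0 + P 1 0) := by simp [hsum]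
      _ = 1 := by
          rw [hP₀, hP₁]
          simp only [map_add, map_sub, map_smul, reTrace_one, reTrace_pauliVec, smul_eq_mul]
          ring
  calc ‖γ 0 + γ 1‖ + ‖γ 0 - γ 1‖ ≤ 2 * ∑ lam, reTrace (τ lam) := by
        rw [hγ 0, hγ 1]
        exact norm_sum_smul_add_add_norm_sum_smul_sub_le
          (fun lam => norm_blochMap_le_reTrace (hτ lam)) (he 0) (he 1)
    _ = 2 := by rw [htr, mul_one]

/-- if the assemblage `ρ(a,m) = (1/4)((1 + (−1)^a ν_m) I + β·σ + (−1)^a γ_m·σ)`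
consists of positive semidefinite matrices and admits a finite LHS model, then
`‖γ1+γ2‖ + ‖γ1−γ2‖ ≤ 2`. -/
theorem lhs_model_necessary (ν : Fin 2 → ℝ) (β : EuclideanSpace ℝ (Fin 3))
    (γ : Fin 2 → EuclideanSpace ℝ (Fin 3))
    (P : Fin 2 → Fin 2 → Matrix (Fin 2) (Fin 2) ℂ)
    (hdef : ∀ a m, P a m = (1/4 : ℝ) •
      ((1 + (-1 : ℝ) ^ (a : ℕ) * ν m) • (1 : Matrix (Fin 2) (Fin 2) ℂ)
        + pauliVec β + ((-1 : ℝ) ^ (a : ℕ)) • pauliVec (γ m)))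
    (hpos : ∀ a m, (P a m).PosSemidef)
    (hlhs : HasLHSModel P) :
    ‖γ 0 + γ 1‖ + ‖γ 0 - γ 1‖ ≤ 2 :=
  lhs_model_necessary_general ν β γ P hdef hlhs

end
end

section
/- Let γ1, γ2 ∈ EuclideanSpace ℝ (Fin 3) satisfy ‖γ1+γ2‖ + ‖γ1−γ2‖ ≤ 2, and for a ∈ {0,1} and m ∈ {1,2} define the 2×2 complex matrix ρ(a,m) := (1/4)·(I + (−1)^a·(γ_m·σ)). Then the family (ρ(a,m)) admits a finite LHS model; indeed there exist positive semidefinite 2×2 matrices σ(λ) indexed by the four functions λ : Fin 2 → Fin 2 such that ρ(a,m) = Σ_{λ with λ(m) = a} σ(λ) for all a, m. -/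
open Matrix Polynomial
open scoped Kronecker Matrix ComplexOrder

noncomputable section

/-! To each deterministic response `λ : Fin 2 → Fin 2` attach the vector
`v_λ = (-1)^λ₀ γ₀ + (-1)^λ₁ γ₁`, whose norm is `‖γ₀ + γ₁‖` or `‖γ₀ - γ₁‖`, and the hidden state
`(1/8) ((1 - (‖γ₀ + γ₁‖ + ‖γ₀ - γ₁‖)/2 + ‖v_λ‖) I + v_λ·σ)`.
Since `(v·σ)² = ‖v‖² I`, the matrix `t I + v·σ` is positive semidefinite as soon as `‖v‖ ≤ t`, so
these states are positive semidefinite exactly under the hypothesis `‖γ₀ + γ₁‖ + ‖γ₀ - γ₁‖ ≤ 2`.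
Summing over the free coordinate of `λ` with `λ m = a`, the vectors `v_λ` add up to `2 (-1)^a γ_m`
and their norms to `‖γ₀ + γ₁‖ + ‖γ₀ - γ₁‖`, which leaves `ρ(a, m)`. -/

theorem Matrix.IsHermitian.posSemidef_smul_one_add_of_mul_self_eq {n 𝕜 : Type*} [Fintype n]
    [DecidableEq n] [RCLike 𝕜] {A : Matrix n n 𝕜} (hA : A.IsHermitian) {c t : ℝ} (hc : 0 ≤ c)
    (hct : c ≤ t) (hAA : A * A = c ^ 2 • (1 : Matrix n n 𝕜)) :
    (t • (1 : Matrix n n 𝕜) + A).PosSemidef := by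
  set M := c • (1 : Matrix n n 𝕜) + A
  have hM : M.PosSemidef := by
    rcases hc.eq_or_lt with rfl | hc
    · have hA0 : A = 0 := by
        rw [← conjTranspose_mul_self_eq_zero, hA.eq, hAA]; simp
      simp [M, hA0, PosSemidef.zero]
    · -- `M * M = 2c • M`, so `M` is a positive multiple of `Mᴴ * M`.
      have hMM : Mᴴ * M = (2 * c) • M := by
        rw [((isHermitian_one.smul (IsSelfAdjoint.all c)).add hA).eq]
        simp only [M, add_mul, mul_add, hAA, smul_mul_assoc, mul_smul_comm, one_mul, mul_one,
          smul_smul, smul_add]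
        module
      have hM_eq : M = (2 * c)⁻¹ • (Mᴴ * M) := by
        rw [hMM, smul_smul, inv_mul_cancel₀ (by positivity), one_smul]
      rw [hM_eq]
      exact (posSemidef_conjTranspose_mul_self M).smul (by positivity)
  have h_split : t • (1 : Matrix n n 𝕜) + A = (t - c) • 1 + M := by
    simp only [M, sub_smul]; abel
  rw [h_split]
  exact (PosSemidef.one.smul (sub_nonneg.2 hct)).add hM

lemma pauliVec_add (v w : EuclideanSpace ℝ (Fin 3)) :
    pauliVec (v + w) = pauliVec v + pauliVec w := by
  simp only [pauliVec, PiLp.add_apply, Complex.ofReal_add, add_smul]; abel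

lemma pauliVec_smul (r : ℝ) (v : EuclideanSpace ℝ (Fin 3)) :
    pauliVec (r • v) = r • pauliVec v := by
  simp only [pauliVec, PiLp.smul_apply, smul_eq_mul, Complex.ofReal_mul, mul_smul, smul_add,
    Complex.coe_smul]

lemma isHermitian_pauliVec (v : EuclideanSpace ℝ (Fin 3)) : (pauliVec v).IsHermitian := by
  ext i j
  fin_cases i <;> fin_cases j <;> simp [pauliVec, σ₁, σ₂, σ₃]

lemma pauliVec_mul_self (v : EuclideanSpace ℝ (Fin 3)) :
    pauliVec v * pauliVec v = ‖v‖ ^ 2 • (1 : Matrix (Fin 2) (Fin 2) ℂ) := by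
  rw [EuclideanSpace.real_norm_sq_eq, Fin.sum_univ_three]
  ext i j
  fin_cases i <;> fin_cases j <;>
    simp [pauliVec, σ₁, σ₂, σ₃, Matrix.mul_apply] <;> ring_nf <;> simp

lemma pauliVec_neg (v : EuclideanSpace ℝ (Fin 3)) : pauliVec (-v) = -pauliVec v := by
  rw [← neg_one_smul ℝ v, pauliVec_smul, neg_one_smul]

lemma pauliVec_sub (v w : EuclideanSpace ℝ (Fin 3)) :
    pauliVec (v - w) = pauliVec v - pauliVec w := by
  rw [sub_eq_add_neg, pauliVec_add, pauliVec_neg, ← sub_eq_add_neg]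

lemma sum_fin_two_fun_fin_two {M : Type*} [AddCommMonoid M] (f : (Fin 2 → Fin 2) → M) :
    ∑ lam, f lam = f ![0, 0] + f ![0, 1] + f ![1, 0] + f ![1, 1] := by
  rw [← (piFinTwoEquiv fun _ => Fin 2).symm.sum_comp, Fintype.sum_prod_type]
  simp only [Fin.sum_univ_two, piFinTwoEquiv_symm_apply]
  abel

lemma hasLHSModel_of_deterministic {Λ : Type*} [Fintype Λ]
    {P : Fin 2 → Fin 2 → Matrix (Fin 2) (Fin 2) ℂ} (τ : Λ → Matrix (Fin 2) (Fin 2) ℂ)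
    (r : Λ → Fin 2 → Fin 2) (hτ : ∀ lam, (τ lam).PosSemidef)
    (hP : ∀ a m, P a m = ∑ lam ∈ Finset.univ.filter (fun lam => r lam m = a), τ lam) :
    HasLHSModel P := by
  let e := Fintype.equivFin Λ
  refine ⟨Fintype.card Λ, fun k => τ (e.symm k),
    fun a m k => if r (e.symm k) m = a then 1 else 0, fun k => hτ _, ?_, ?_, ?_⟩
  · intro a m k
    dsimp only
    split_ifs <;> norm_num
  · intro m k
    rcases Fin.exists_fin_two.1 ⟨r (e.symm k) m, rfl⟩ with h | h <;> simp [h]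
  · intro a m
    rw [hP, Finset.sum_filter, ← e.symm.sum_comp]
    simp only [ite_smul, one_smul, zero_smul]

def lhsState (γ : Fin 2 → EuclideanSpace ℝ (Fin 3)) (lam : Fin 2 → Fin 2) :
    Matrix (Fin 2) (Fin 2) ℂ :=
  let v := ∑ m, (-1 : ℝ) ^ (lam m : ℕ) • γ m
  (1 / 8 : ℝ) • ((1 - (‖γ 0 + γ 1‖ + ‖γ 0 - γ 1‖) / 2 + ‖v‖) • 1 + pauliVec v)

lemma posSemidef_lhsState {γ : Fin 2 → EuclideanSpace ℝ (Fin 3)}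
    (hγ : ‖γ 0 + γ 1‖ + ‖γ 0 - γ 1‖ ≤ 2) (lam : Fin 2 → Fin 2) :
    (lhsState γ lam).PosSemidef := by
  set v := ∑ m, (-1 : ℝ) ^ (lam m : ℕ) • γ m
  exact ((isHermitian_pauliVec v).posSemidef_smul_one_add_of_mul_self_eq (norm_nonneg v)
    (by linarith) (pauliVec_mul_self v)).smul (by norm_num)

lemma sum_lhsState (γ : Fin 2 → EuclideanSpace ℝ (Fin 3)) (a m : Fin 2) :
    ∑ lam ∈ Finset.univ.filter (fun lam : Fin 2 → Fin 2 => lam m = a), lhsState γ lam =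
      (1 / 4 : ℝ) • (1 + ((-1 : ℝ) ^ (a : ℕ)) • pauliVec (γ m)) := by
  have hnorm₁ : ‖-γ 0 + γ 1‖ = ‖γ 0 - γ 1‖ := by rw [← norm_neg]; congr 1; abel
  have hnorm₂ : ‖-γ 0 - γ 1‖ = ‖γ 0 + γ 1‖ := by rw [← norm_neg]; congr 1; abel
  rw [Finset.sum_filter, sum_fin_two_fun_fin_two]
  fin_cases a <;> fin_cases m <;>
    simp [lhsState, Fin.sum_univ_two, pauliVec_add, pauliVec_neg, pauliVec_sub,
      ← sub_eq_add_neg, hnorm₁, hnorm₂] <;> module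

/-- if `‖γ1+γ2‖ + ‖γ1−γ2‖ ≤ 2`, then the assemblage
`ρ(a,m) = (1/4)(I + (−1)^a γ_m·σ)` admits a finite LHS model; indeed there are positive
semidefinite matrices `τ(λ)` indexed by `λ : Fin 2 → Fin 2` with
`ρ(a,m) = Σ_{λ(m) = a} τ(λ)`. -/
theorem lhs_model_sufficient (γ : Fin 2 → EuclideanSpace ℝ (Fin 3))
    (hγ : ‖γ 0 + γ 1‖ + ‖γ 0 - γ 1‖ ≤ 2)
    (P : Fin 2 → Fin 2 → Matrix (Fin 2) (Fin 2) ℂ)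
    (hdef : ∀ a m, P a m = (1/4 : ℝ) •
      ((1 : Matrix (Fin 2) (Fin 2) ℂ) + ((-1 : ℝ) ^ (a : ℕ)) • pauliVec (γ m))) :
    HasLHSModel P ∧
    ∃ τ : (Fin 2 → Fin 2) → Matrix (Fin 2) (Fin 2) ℂ,
      (∀ lam, (τ lam).PosSemidef) ∧
      ∀ a m, P a m = ∑ lam ∈ Finset.univ.filter (fun lam : Fin 2 → Fin 2 => lam m = a),
        τ lam := by
  have hP : ∀ a m, P a m = ∑ lam ∈ Finset.univ.filter (fun lam : Fin 2 → Fin 2 => lam m = a),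
      lhsState γ lam := fun a m => by rw [hdef, sum_lhsState]
  exact ⟨hasLHSModel_of_deterministic _ id (posSemidef_lhsState hγ) hP,
    _, posSemidef_lhsState hγ, hP⟩

end
end
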